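/- For the dicyclic group Dic_n = ⟨a,x | a^{2n} = x^4 = x^{-1}axa = e⟩ of order 4n with n ≥ 2, Player 1 has a winning strategy for RAV(Dic_n, {a,x}). -/

import Mathlib

namespace RelatorGames

variable {G : Type*} [Group G]

/-- The letters available in the relator games: elements of `S` and their inverses. -/
def letters (S : Set G) : Set G := S ∪ (fun g => g⁻¹) '' S

/-- Evaluate a history of moves (most recent letter first) to a group element:
the group element represented by the word built so far. -/
def eval (h : List G) : G := h.reverse.prod

/-- A move `m` is legal after history `h`: it is a letter of `S ∪ S⁻¹` and it is not
the inverse of the immediately preceding letter (no backtracking). -/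
def LegalMove (S : Set G) (h : List G) (m : G) : Prop :=
  m ∈ letters S ∧ ∀ p ∈ h.head?, m ≠ p⁻¹

/-- Appending `m` to the history `h` produces a word equal in `G` to some earlier
prefix of the word (equivalently, the walk in the Cayley graph revisits a vertex). -/
def ClosesCycle (h : List G) (m : G) : Prop :=
  ∃ t, t <:+ h ∧ eval t = eval (m :: h)

/-- A strategy: a choice of next letter given the history (most recent letter first). -/
abbrev Strategy (G : Type*) := List G → G

/-- The sequence of histories arising when the first player (moving at even steps)
uses `σ` and the second player (moving at odd steps) uses `τ`. -/
def hist (σ τ : Strategy G) : ℕ → List G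
  | 0 => []
  | k + 1 =>
      (if k % 2 = 0 then σ (hist σ τ k) else τ (hist σ τ k)) :: hist σ τ k

/-- The move made at step `k` in the play of `σ` against `τ`. -/
def moveAt (σ τ : Strategy G) (k : ℕ) : G :=
  if k % 2 = 0 then σ (hist σ τ k) else τ (hist σ τ k)

/-- Step `j` is uneventful: the move made is legal and does not close a cycle. -/
def Ok (S : Set G) (σ τ : Strategy G) (j : ℕ) : Prop :=
  LegalMove S (hist σ τ j) (moveAt σ τ j) ∧ ¬ ClosesCycle (hist σ τ j) (moveAt σ τ j)

/-- In the play of `σ` against `τ`, the player moving at steps congruent to `p` mod 2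
wins the relator achievement game `REL(G,S)`: at the first eventful step, either it is
that player's turn and they legally close a cycle, or it is the opponent's turn and the
opponent has made an illegal move (in particular, has no legal move). -/
def RelWins (S : Set G) (p : ℕ) (σ τ : Strategy G) : Prop :=
  ∃ k : ℕ, (∀ j < k, Ok S σ τ j) ∧
    ((k % 2 = p ∧ LegalMove S (hist σ τ k) (moveAt σ τ k) ∧
        ClosesCycle (hist σ τ k) (moveAt σ τ k)) ∨
      (k % 2 ≠ p ∧ ¬ LegalMove S (hist σ τ k) (moveAt σ τ k)))

/-- In the play of `σ` against `τ`, the player moving at steps congruent to `p` mod 2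
wins the relator avoidance game `RAV(G,S)`: at the first eventful step it is the
opponent's turn, and the opponent either makes an illegal move (in particular, has no
legal move) or closes a cycle. -/
def RavWins (S : Set G) (p : ℕ) (σ τ : Strategy G) : Prop :=
  ∃ k : ℕ, (∀ j < k, Ok S σ τ j) ∧ k % 2 ≠ p ∧
    (¬ LegalMove S (hist σ τ k) (moveAt σ τ k) ∨ ClosesCycle (hist σ τ k) (moveAt σ τ k))

/-- Player 1 has a winning strategy for `REL(G,S)`. -/
def FirstWinsREL (S : Set G) : Prop :=
  ∃ σ : Strategy G, ∀ τ : Strategy G, RelWins S 0 σ τ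

/-- Player 2 has a winning strategy for `REL(G,S)`. -/
def SecondWinsREL (S : Set G) : Prop :=
  ∃ τ : Strategy G, ∀ σ : Strategy G, RelWins S 1 σ τ

/-- Player 1 has a winning strategy for `RAV(G,S)`. -/
def FirstWinsRAV (S : Set G) : Prop :=
  ∃ σ : Strategy G, ∀ τ : Strategy G, RavWins S 0 σ τ

/-- Player 2 has a winning strategy for `RAV(G,S)`. -/
def SecondWinsRAV (S : Set G) : Prop :=
  ∃ τ : Strategy G, ∀ σ : Strategy G, RavWins S 1 σ τ

end RelatorGames

/-!
Player 1 fixes a function `ℓ` choosing a letter at every vertex so that `g ↦ g * ℓ g` is a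
fixed-point-free involution of the Cayley graph, and always moves from the current vertex `g` to
its partner `g * ℓ g`. After each of Player 1's moves the set of visited vertices is a union of
partner pairs, so the vertex Player 2 has just reached, being new, has an unvisited partner:
Player 1's reply is never a backtrack and never closes a cycle. In a finite group the game must
end, hence it ends on a move of Player 2. In `Dic_n` toggling the `x`-coordinate, i.e. multiplying
`a^k` by `x` and `a^k x` by `x⁻¹`, is such a pairing.
-/

namespace RelatorGames

section Play

variable {G : Type*} (σ τ : Strategy G)

lemma hist_succ (k : ℕ) : hist σ τ (k + 1) = moveAt σ τ k :: hist σ τ k := rfl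

lemma suffix_hist_iff {t : List G} {k : ℕ} :
    t <:+ hist σ τ k ↔ ∃ i ≤ k, hist σ τ i = t := by
  induction k with
  | zero => simp [hist, eq_comm]
  | succ k ih =>
    rw [hist_succ, List.suffix_cons_iff, ← hist_succ, ih]
    constructor
    · rintro (rfl | ⟨i, hi, rfl⟩)
      exacts [⟨k + 1, le_rfl, rfl⟩, ⟨i, by omega, rfl⟩]
    · rintro ⟨i, hi, rfl⟩
      rcases Nat.lt_or_eq_of_le hi with hi | rfl
      exacts [Or.inr ⟨i, by omega, rfl⟩, Or.inl rfl]

variable [Group G] {S : Set G}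

lemma eval_cons (m : G) (h : List G) : eval (m :: h) = eval h * m := by
  simp [eval]

lemma eval_hist_succ (k : ℕ) :
    eval (hist σ τ (k + 1)) = eval (hist σ τ k) * moveAt σ τ k := by
  rw [hist_succ, eval_cons]

lemma closesCycle_hist_iff (k : ℕ) :
    ClosesCycle (hist σ τ k) (moveAt σ τ k) ↔
      ∃ i ≤ k, eval (hist σ τ i) = eval (hist σ τ (k + 1)) := by
  simp only [ClosesCycle, suffix_hist_iff, ← hist_succ]
  constructor
  · rintro ⟨t, ⟨i, hi, rfl⟩, he⟩
    exact ⟨i, hi, he⟩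
  · rintro ⟨i, hi, he⟩
    exact ⟨_, ⟨i, hi, rfl⟩, he⟩

lemma Ok.eval_hist_ne {j : ℕ} (hj : Ok S σ τ j) {i : ℕ} (hi : i ≤ j) :
    eval (hist σ τ i) ≠ eval (hist σ τ (j + 1)) :=
  fun he => hj.2 ((closesCycle_hist_iff σ τ j).2 ⟨i, hi, he⟩)

/-- A move to a vertex not visited before is automatically not a backtrack. -/
lemma ok_of_mem_of_forall_ne {k : ℕ} (hmem : moveAt σ τ k ∈ letters S)
    (hfresh : ∀ i ≤ k, eval (hist σ τ i) ≠ eval (hist σ τ (k + 1))) : Ok S σ τ k := by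
  refine ⟨⟨hmem, ?_⟩, fun hc => ?_⟩
  · cases k with
    | zero => simp [hist]
    | succ j =>
      intro p hp hback
      obtain rfl : moveAt σ τ j = p := by simpa [hist_succ] using hp
      apply hfresh j (by omega)
      rw [eval_hist_succ σ τ (j + 1), eval_hist_succ, hback, mul_inv_cancel_right]
  · obtain ⟨i, hi, he⟩ := (closesCycle_hist_iff σ τ k).1 hc
    exact hfresh i hi he

lemma eval_hist_ne_of_ok {k : ℕ} (hok : ∀ j < k, Ok S σ τ j) {i j : ℕ} (hij : i < j)
    (hjk : j ≤ k) : eval (hist σ τ i) ≠ eval (hist σ τ j) := by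
  obtain ⟨j, rfl⟩ : ∃ j', j = j' + 1 := ⟨j - 1, by omega⟩
  exact (hok j (by omega)).eval_hist_ne σ τ (by omega)

lemma exists_not_ok [Finite G] : ∃ k, ¬ Ok S σ τ k := by
  by_contra! hok
  obtain ⟨i, j, hij, he⟩ := Finite.exists_ne_map_eq_of_infinite fun k => eval (hist σ τ k)
  rcases Nat.lt_or_gt_of_ne hij with h | h
  · exact eval_hist_ne_of_ok σ τ (fun j _ => hok j) h le_rfl he
  · exact eval_hist_ne_of_ok σ τ (fun j _ => hok j) h le_rfl he.symm

lemma ravWins_zero_of_ok_of_even [Finite G]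
    (heven : ∀ k, k % 2 = 0 → (∀ j < k, Ok S σ τ j) → Ok S σ τ k) : RavWins S 0 σ τ := by
  classical
  have hex := exists_not_ok (S := S) σ τ
  have hmin : ∀ j < Nat.find hex, Ok S σ τ j := fun j hj => not_not.1 (Nat.find_min hex hj)
  have hbad := Nat.find_spec hex
  refine ⟨Nat.find hex, hmin, fun h => hbad (heven _ h hmin), ?_⟩
  rw [Ok, not_and_or, not_not] at hbad
  exact hbad

end Play

section Pairing

variable {G : Type*} [Group G] {S : Set G} (ℓ : G → G)

lemma mul_apply_mul_apply_eq_self (hinv : ∀ g, ℓ (g * ℓ g) = (ℓ g)⁻¹) (g : G) :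
    g * ℓ g * ℓ (g * ℓ g) = g := by
  rw [hinv, mul_inv_cancel_right]

def pairingStrategy : Strategy G := fun h => ℓ (eval h)

variable (τ : Strategy G)

lemma eval_hist_pairingStrategy_succ {k : ℕ} (hk : k % 2 = 0) :
    eval (hist (pairingStrategy ℓ) τ (k + 1)) =
      eval (hist (pairingStrategy ℓ) τ k) * ℓ (eval (hist (pairingStrategy ℓ) τ k)) := by
  rw [eval_hist_succ, moveAt, if_pos hk]
  rfl

lemma exists_eval_hist_pairingStrategy_eq (hinv : ∀ g, ℓ (g * ℓ g) = (ℓ g)⁻¹) (m : ℕ)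
    {i : ℕ} (hi : i < 2 * m) :
    ∃ j < 2 * m, eval (hist (pairingStrategy ℓ) τ j) =
      eval (hist (pairingStrategy ℓ) τ i) * ℓ (eval (hist (pairingStrategy ℓ) τ i)) := by
  set v := fun k => eval (hist (pairingStrategy ℓ) τ k)
  induction m with
  | zero => omega
  | succ m ih =>
    have hpair : v (2 * m + 1) = v (2 * m) * ℓ (v (2 * m)) :=
      eval_hist_pairingStrategy_succ ℓ τ (by omega)
    rcases (show i < 2 * m ∨ i = 2 * m ∨ i = 2 * m + 1 by omega) with hi | rfl | rfl
    · obtain ⟨j, hj, he⟩ := ih hi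
      exact ⟨j, by omega, he⟩
    · exact ⟨2 * m + 1, by omega, hpair⟩
    · refine ⟨2 * m, by omega, ?_⟩
      change v (2 * m) = v (2 * m + 1) * ℓ (v (2 * m + 1))
      rw [hpair, mul_apply_mul_apply_eq_self ℓ hinv]

lemma ok_pairingStrategy (hmem : ∀ g, ℓ g ∈ letters S) (hne : ∀ g, ℓ g ≠ 1)
    (hinv : ∀ g, ℓ (g * ℓ g) = (ℓ g)⁻¹) {k : ℕ} (hk : k % 2 = 0)
    (hok : ∀ j < k, Ok S (pairingStrategy ℓ) τ j) : Ok S (pairingStrategy ℓ) τ k := by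
  set v := fun k => eval (hist (pairingStrategy ℓ) τ k)
  have hnext : v (k + 1) = v k * ℓ (v k) := eval_hist_pairingStrategy_succ ℓ τ hk
  have hfresh : ∀ i < k, v i ≠ v k := fun i hi => eval_hist_ne_of_ok _ τ hok hi le_rfl
  have hpartner_fresh : ∀ i < k, v i ≠ v (k + 1) := by
    intro i hi he
    obtain ⟨j, hj, hje⟩ :=
      exists_eval_hist_pairingStrategy_eq ℓ τ hinv (k / 2) (i := i) (by omega)
    refine hfresh j (by omega) ?_
    change v j = v i * ℓ (v i) at hje
    rw [hje, he, hnext, mul_apply_mul_apply_eq_self ℓ hinv]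
  refine ok_of_mem_of_forall_ne _ τ (by rw [moveAt, if_pos hk]; exact hmem _) fun i hi => ?_
  rcases Nat.lt_or_eq_of_le hi with hi | rfl
  · exact hpartner_fresh i hi
  · change v i ≠ v (i + 1)
    rw [hnext]
    simpa using hne (v i)

theorem firstWinsRAV_of_pairing [Finite G] (hmem : ∀ g, ℓ g ∈ letters S)
    (hne : ∀ g, ℓ g ≠ 1) (hinv : ∀ g, ℓ (g * ℓ g) = (ℓ g)⁻¹) : FirstWinsRAV S :=
  ⟨pairingStrategy ℓ, fun τ =>
    ravWins_zero_of_ok_of_even _ τ fun _ hk => ok_pairingStrategy ℓ τ hmem hne hinv hk⟩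

end Pairing

end RelatorGames

namespace QuaternionGroup

variable {n : ℕ}

lemma inv_xa_zero : (xa 0 : QuaternionGroup n)⁻¹ = xa n := by
  apply inv_eq_of_mul_eq_one_right
  rw [xa_mul_xa, sub_zero, ← Nat.cast_add, ← two_mul, ZMod.natCast_self, one_def]

/-- Multiplying by `xa 0 = x` or by `xa n = x⁻¹` toggles the `x`-coordinate of the normal
form `a^k x^j`. -/
def toggleX : QuaternionGroup n → QuaternionGroup n
  | a _ => xa 0
  | xa _ => xa n

lemma toggleX_mem_letters (g : QuaternionGroup n) :
    toggleX g ∈ RelatorGames.letters ({a 1, xa 0} : Set (QuaternionGroup n)) := by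
  cases g with
  | a i => exact Or.inl (Or.inr rfl)
  | xa i => exact Or.inr ⟨xa 0, Or.inr rfl, inv_xa_zero⟩

lemma toggleX_ne_one (g : QuaternionGroup n) : toggleX g ≠ 1 := by
  cases g <;> rw [toggleX, one_def] <;> exact fun h => nomatch h

lemma toggleX_mul_toggleX (g : QuaternionGroup n) :
    toggleX (g * toggleX g) = (toggleX g)⁻¹ := by
  cases g with
  | a i => rw [toggleX, a_mul_xa, toggleX, inv_xa_zero]
  | xa i => rw [toggleX, xa_mul_xa, toggleX, ← inv_xa_zero, inv_inv]

end QuaternionGroup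

open RelatorGames in
/-- For the dicyclic group `Dic_n` (`n ≥ 2`) with generators `{a,x}`,
Player 1 has a winning strategy for `RAV(Dic_n, {a,x})`. -/
theorem rav_dicyclic_two_generators (n : ℕ) (hn : 2 ≤ n) :
    FirstWinsRAV
      ({QuaternionGroup.a 1, QuaternionGroup.xa 0} : Set (QuaternionGroup n)) := by
  have : NeZero n := ⟨by omega⟩
  exact firstWinsRAV_of_pairing QuaternionGroup.toggleX QuaternionGroup.toggleX_mem_letters
    QuaternionGroup.toggleX_ne_one QuaternionGroup.toggleX_mul_toggleX
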